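/- Let F: [a,b] × ℝ² → ℝ be continuous and satisfy: (i) F is non-decreasing in the second variable, i.e. (F(x,y,z) − F(x,ỹ,z))(y − ỹ) ≥ 0 for all x ∈ [a,b] and y, ỹ, z ∈ ℝ; (ii) F is globally Lipschitz in the third variable, i.e. there is k ≥ 0 with |F(x,y,z) − F(x,y,z̃)| ≤ k|z − z̃| for all x ∈ [a,b], y, z, z̃ ∈ ℝ. Then for any A, B ∈ ℝ the boundary value problem Lu = F(x,u,u'), u(a) = A, u(b) = B has at most one solution u ∈ C¹([a,b]). -/

import Mathlib

open Set MeasureTheory intervalIntegral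

/-- A function `u ∈ C¹([a,b])` is a solution of the boundary value problem
`Lu = F(x,u,u')`, `u(a) = A`, `u(b) = B` for the second order operator `L` with
generalized drift (with data `σ` and `Σ = Sig`) if `u(a) = A`, `u(b) = B` and,
denoting by `d` the derivative of `u` on `[a,b]` (which is continuous), there is
`x₁ ∈ ℝ` such that
`u'(x) = e^{−Σ(x)} (2 ∫_a^x e^{Σ(y)} F(y,u(y),u'(y))/σ²(y) dy + x₁)` on `[a,b]`. -/
def IsBVPSolutionF (σ Sig : ℝ → ℝ) (a b A B : ℝ) (F : ℝ → ℝ → ℝ → ℝ) (u : ℝ → ℝ) :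
    Prop :=
  u a = A ∧ u b = B ∧
  ∃ (d : ℝ → ℝ) (x₁ : ℝ),
    ContinuousOn d (Set.Icc a b) ∧
    (∀ x ∈ Set.Icc a b, HasDerivWithinAt u (d x) (Set.Icc a b) x) ∧
    ∀ x ∈ Set.Icc a b,
      d x = Real.exp (-(Sig x)) *
        (2 * (∫ y in a..x, Real.exp (Sig y) * F y (u y) (d y) / (σ y) ^ 2) + x₁)

/-!
For two solutions `u`, `v` put `w = u - v` and `h = e^Σ (u' - v')`, so that
`h' = 2 e^Σ (F(x,u,u') - F(x,v,v')) / σ²` inside `(a,b)`. If `w` had a positive maximum at `m`,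
then `h(m) = 0`. While `w > 0`, monotonicity of `F` in `y` and the Lipschitz bound in `z` give
`h' ≥ C h` wherever `h < 0`, so `e^{-Cx} h` cannot decrease while negative and `h` stays
nonnegative. Hence `w` is nondecreasing from `m` up to its first zero after `m`, which is absurd.
-/

theorem monotoneOn_Icc_of_hasDerivAt_nonneg {f f' : ℝ → ℝ} {a b : ℝ}
    (hf : ContinuousOn f (Icc a b)) (hf' : ∀ x ∈ Ioo a b, HasDerivAt f (f' x) x)
    (hf'₀ : ∀ x ∈ Ioo a b, 0 ≤ f' x) : MonotoneOn f (Icc a b) :=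
  monotoneOn_of_hasDerivWithinAt_nonneg (convex_Icc a b) hf
    (by simpa only [interior_Icc] using fun x hx => (hf' x hx).hasDerivWithinAt)
    (by simpa only [interior_Icc] using hf'₀)

theorem ContinuousOn.exists_first_nonpos {f : ℝ → ℝ} {a b : ℝ} (hab : a ≤ b)
    (hf : ContinuousOn f (Icc a b)) (ha : 0 < f a) (hb : f b ≤ 0) :
    ∃ t ∈ Ioc a b, f t ≤ 0 ∧ ∀ x ∈ Ico a t, 0 < f x := by
  have hS : IsClosed (Icc a b ∩ f ⁻¹' Iic 0) :=
    hf.preimage_isClosed_of_isClosed isClosed_Icc isClosed_Iic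
  have hSbdd : BddBelow (Icc a b ∩ f ⁻¹' Iic 0) := ⟨a, fun x hx => hx.1.1⟩
  obtain ⟨⟨hat, htb⟩, ht⟩ := hS.csInf_mem ⟨b, right_mem_Icc.2 hab, hb⟩ hSbdd
  refine ⟨_, ⟨hat.lt_of_ne fun h => ?_, htb⟩, ht, fun x hx => ?_⟩
  · exact (ha.trans_le (h ▸ ht)).false
  · by_contra! hx0
    exact (csInf_le hSbdd ⟨⟨hx.1, hx.2.le.trans htb⟩, hx0⟩).not_gt hx.2

theorem ContinuousOn.exists_last_nonneg {f : ℝ → ℝ} {a b : ℝ} (hab : a ≤ b)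
    (hf : ContinuousOn f (Icc a b)) (ha : 0 ≤ f a) (hb : f b < 0) :
    ∃ s ∈ Ico a b, 0 ≤ f s ∧ ∀ x ∈ Ioc s b, f x < 0 := by
  have hS : IsClosed (Icc a b ∩ f ⁻¹' Ici 0) :=
    hf.preimage_isClosed_of_isClosed isClosed_Icc isClosed_Ici
  have hSbdd : BddAbove (Icc a b ∩ f ⁻¹' Ici 0) := ⟨b, fun x hx => hx.1.2⟩
  obtain ⟨⟨has, hsb⟩, hs⟩ := hS.csSup_mem ⟨a, left_mem_Icc.2 hab, ha⟩ hSbdd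
  refine ⟨_, ⟨has, hsb.lt_of_ne fun h => ?_⟩, hs, fun x hx => ?_⟩
  · exact (hb.trans_le (h ▸ hs)).false
  · by_contra! hx0
    exact (le_csSup hSbdd ⟨⟨has.trans hx.1.le, hx.2⟩, hx0⟩).not_gt hx.1

theorem nonneg_of_hasDerivAt_nonneg_of_neg {f f' : ℝ → ℝ} {a b : ℝ}
    (hf : ContinuousOn f (Icc a b)) (hf' : ∀ x ∈ Ioo a b, HasDerivAt f (f' x) x)
    (ha : 0 ≤ f a) (hf'₀ : ∀ x ∈ Ioo a b, f x < 0 → 0 ≤ f' x) :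
    ∀ x ∈ Icc a b, 0 ≤ f x := by
  intro r hr
  by_contra! hfr
  obtain ⟨s, ⟨has, hsr⟩, hfs, hneg⟩ :=
    (hf.mono (Icc_subset_Icc_right hr.2)).exists_last_nonneg hr.1 ha hfr
  have hsub : Icc s r ⊆ Icc a b := Icc_subset_Icc has hr.2
  have hmono : MonotoneOn f (Icc s r) :=
    monotoneOn_Icc_of_hasDerivAt_nonneg (hf.mono hsub)
      (fun x hx => hf' x (Ioo_subset_Ioo has hr.2 hx))
      (fun x hx => hf'₀ x (Ioo_subset_Ioo has hr.2 hx) (hneg x (Ioo_subset_Ioc_self hx)))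
  exact hfr.not_ge (hfs.trans (hmono (left_mem_Icc.2 hsr.le) (right_mem_Icc.2 hsr.le) hsr.le))

theorem nonneg_of_hasDerivAt_ge_mul_of_neg {f f' : ℝ → ℝ} {a b C : ℝ}
    (hf : ContinuousOn f (Icc a b)) (hf' : ∀ x ∈ Ioo a b, HasDerivAt f (f' x) x)
    (ha : 0 ≤ f a) (hC : ∀ x ∈ Ioo a b, f x < 0 → C * f x ≤ f' x) :
    ∀ x ∈ Icc a b, 0 ≤ f x := by
  have hexp : ∀ x, HasDerivAt (fun x => Real.exp (-C * x)) (Real.exp (-C * x) * -C) x :=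
    fun x => by simpa using ((hasDerivAt_id x).const_mul (-C)).exp
  have hweighted := nonneg_of_hasDerivAt_nonneg_of_neg (f := fun x => Real.exp (-C * x) * f x)
    ((Real.continuous_exp.comp (continuous_const.mul continuous_id)).continuousOn.mul hf)
    (fun x hx => (hexp x).mul (hf' x hx)) (mul_nonneg (Real.exp_pos _).le ha) fun x hx hx0 => by
      have hfx : f x < 0 := neg_of_mul_neg_right hx0 (Real.exp_pos _).le
      calc 0 ≤ Real.exp (-C * x) * (f' x - C * f x) :=
            mul_nonneg (Real.exp_pos _).le (sub_nonneg.2 (hC x hx hfx))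
        _ = _ := by ring
  exact fun x hx => nonneg_of_mul_nonneg_right (hweighted x hx) (Real.exp_pos _)

/-- A maximum principle in which `h` stands for the flux `e^Σ w'`; only its sign is tied to `w'`. -/
theorem nonpos_of_flux_deriv_ge_mul {w w' h h' : ℝ → ℝ} {a b C : ℝ}
    (hw : ContinuousOn w (Icc a b)) (hw' : ∀ x ∈ Ioo a b, HasDerivAt w (w' x) x)
    (hh : ContinuousOn h (Icc a b)) (hh' : ∀ x ∈ Ioo a b, HasDerivAt h (h' x) x)
    (hsign : ∀ x ∈ Ioo a b, 0 ≤ w' x ↔ 0 ≤ h x)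
    (hC : ∀ x ∈ Ioo a b, 0 < w x → h x < 0 → C * h x ≤ h' x)
    (ha : w a ≤ 0) (hb : w b ≤ 0) : ∀ x ∈ Icc a b, w x ≤ 0 := by
  by_contra! ⟨p, hp, hwp⟩
  obtain ⟨m, hm, hmax⟩ := isCompact_Icc.exists_isMaxOn ⟨p, hp⟩ hw
  have hwm : 0 < w m := hwp.trans_le (hmax hp)
  have hm' : m ∈ Ioo a b :=
    ⟨hm.1.lt_of_ne (by rintro rfl; linarith), hm.2.lt_of_ne (by rintro rfl; linarith)⟩
  have hhm : 0 ≤ h m :=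
    (hsign m hm').1 ((hmax.isLocalMax (Icc_mem_nhds hm'.1 hm'.2)).hasDerivAt_eq_zero (hw' m hm')).ge
  obtain ⟨t, ⟨hmt, htb⟩, hwt, hw_pos⟩ :=
    (hw.mono (Icc_subset_Icc_left hm.1)).exists_first_nonpos hm.2 hwm hb
  have hsub : Ioo m t ⊆ Ioo a b := Ioo_subset_Ioo hm.1 htb
  have hh_nonneg : ∀ x ∈ Icc m t, 0 ≤ h x :=
    nonneg_of_hasDerivAt_ge_mul_of_neg (hh.mono (Icc_subset_Icc hm.1 htb))
      (fun x hx => hh' x (hsub hx)) hhm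
      (fun x hx => hC x (hsub hx) (hw_pos x (Ioo_subset_Ico_self hx)))
  have hmono : MonotoneOn w (Icc m t) :=
    monotoneOn_Icc_of_hasDerivAt_nonneg (hw.mono (Icc_subset_Icc hm.1 htb))
      (fun x hx => hw' x (hsub hx))
      (fun x hx => (hsign x (hsub hx)).2 (hh_nonneg x (Ioo_subset_Icc_self hx)))
  exact (hwm.trans_le (hmono (left_mem_Icc.2 hmt.le) (right_mem_Icc.2 hmt.le) hmt.le)).not_ge hwt

theorem ContinuousOn.integral_hasDerivAt_of_mem_Ioo {G : ℝ → ℝ} {a b x : ℝ}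
    (hG : ContinuousOn G (Icc a b)) (hx : x ∈ Ioo a b) :
    HasDerivAt (fun t => ∫ y in a..t, G y) (G x) x :=
  integral_hasDerivAt_right
    ((hG.mono (Icc_subset_Icc_right hx.2.le)).intervalIntegrable_of_Icc hx.1.le)
    ((hG.mono Ioo_subset_Icc_self).stronglyMeasurableAtFilter isOpen_Ioo x hx)
    ((hG x (Ioo_subset_Icc_self hx)).continuousAt (Icc_mem_nhds hx.1 hx.2))

theorem mul_le_two_mul_div_sub_of_mono_of_lipschitz {G : ℝ → ℝ → ℝ} {k C e s y y' z z' : ℝ}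
    (he : 0 < e) (hs : 0 < s) (hC : 2 * k / s ≤ C)
    (hmono : 0 ≤ (G y z - G y' z) * (y - y')) (hLip : |G y' z - G y' z'| ≤ k * |z - z'|)
    (hy : y' < y) (hz : z ≤ z') :
    C * (e * (z - z')) ≤ 2 * (e * G y z / s) - 2 * (e * G y' z' / s) := by
  have hG₁ : 0 ≤ G y z - G y' z := nonneg_of_mul_nonneg_left hmono (sub_pos.2 hy)
  have hG₂ : k * (z - z') ≤ G y' z - G y' z' := by
    have := (abs_le.1 (abs_of_nonpos (sub_nonpos.2 hz) ▸ hLip)).1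
    linarith
  calc C * (e * (z - z')) ≤ 2 * k / s * (e * (z - z')) :=
        mul_le_mul_of_nonpos_right hC (mul_nonpos_of_nonneg_of_nonpos he.le (sub_nonpos.2 hz))
    _ = 2 * e / s * (k * (z - z')) := by ring
    _ ≤ 2 * e / s * (G y z - G y' z') := by gcongr; linarith
    _ = 2 * (e * G y z / s) - 2 * (e * G y' z' / s) := by ring

namespace IsBVPSolutionF

variable {σ Sig : ℝ → ℝ} {a b A B : ℝ} {F : ℝ → ℝ → ℝ → ℝ} {u v : ℝ → ℝ}

theorem exists_hasDerivAt_exp_mul_deriv (hσ : Continuous σ) (hSig : Continuous Sig)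
    (hσ₀ : ∀ x, σ x ≠ 0)
    (hF : ContinuousOn (fun p : ℝ × ℝ × ℝ => F p.1 p.2.1 p.2.2) {p | p.1 ∈ Icc a b})
    (hu : IsBVPSolutionF σ Sig a b A B F u) :
    ∃ d : ℝ → ℝ, ContinuousOn d (Icc a b) ∧
      (∀ x ∈ Icc a b, HasDerivWithinAt u (d x) (Icc a b) x) ∧
      ∀ x ∈ Ioo a b, HasDerivAt (fun y => Real.exp (Sig y) * d y)
        (2 * (Real.exp (Sig x) * F x (u x) (d x) / σ x ^ 2)) x := by
  obtain ⟨-, -, d, x₁, hd, hud, hdeq⟩ := hu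
  refine ⟨d, hd, hud, fun x hx => ?_⟩
  have hG : ContinuousOn (fun y => Real.exp (Sig y) * F y (u y) (d y) / σ y ^ 2) (Icc a b) := by
    refine ContinuousOn.div ?_ (hσ.pow 2).continuousOn fun y _ => pow_ne_zero 2 (hσ₀ y)
    refine (Real.continuous_exp.comp hSig).continuousOn.mul (hF.comp (f := fun y => (y, u y, d y))
      ?_ fun y hy => hy)
    exact continuousOn_id.prodMk
      (ContinuousOn.prodMk (fun y hy => (hud y hy).continuousWithinAt) hd)
  have hflux : EqOn
      (fun y => 2 * (∫ z in a..y, Real.exp (Sig z) * F z (u z) (d z) / σ z ^ 2) + x₁)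
      (fun y => Real.exp (Sig y) * d y) (Icc a b) := fun y hy => by
    simp only [hdeq y hy, ← mul_assoc, ← Real.exp_add, add_neg_cancel, Real.exp_zero, one_mul]
  exact (((hG.integral_hasDerivAt_of_mem_Ioo hx).const_mul 2).add_const x₁).congr_of_eventuallyEq
    (hflux.eventuallyEq_of_mem (Icc_mem_nhds hx.1 hx.2)).symm

theorem le_on_Icc (hσ : Continuous σ) (hSig : Continuous Sig) (hσpos : ∀ x, 0 < σ x)
    (hF : ContinuousOn (fun p : ℝ × ℝ × ℝ => F p.1 p.2.1 p.2.2) {p | p.1 ∈ Icc a b})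
    (hmono : ∀ x ∈ Icc a b, ∀ y y' z : ℝ, 0 ≤ (F x y z - F x y' z) * (y - y')) {k : ℝ}
    (hLip : ∀ x ∈ Icc a b, ∀ y z z' : ℝ, |F x y z - F x y z'| ≤ k * |z - z'|)
    (hu : IsBVPSolutionF σ Sig a b A B F u) (hv : IsBVPSolutionF σ Sig a b A B F v) :
    ∀ x ∈ Icc a b, u x ≤ v x := by
  obtain ⟨du, hdu, hudu, hflux_u⟩ :=
    hu.exists_hasDerivAt_exp_mul_deriv hσ hSig (fun x => (hσpos x).ne') hF
  obtain ⟨dv, hdv, hvdv, hflux_v⟩ :=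
    hv.exists_hasDerivAt_exp_mul_deriv hσ hSig (fun x => (hσpos x).ne') hF
  obtain ⟨C, hC⟩ := (isCompact_Icc (a := a) (b := b)).bddAbove_image
    (f := fun x => 2 * k / σ x ^ 2)
    (continuous_const.div (hσ.pow 2) fun x => pow_ne_zero 2 (hσpos x).ne').continuousOn
  have hflux_ge : ∀ x ∈ Ioo a b, 0 < u x - v x → Real.exp (Sig x) * (du x - dv x) < 0 →
      C * (Real.exp (Sig x) * (du x - dv x)) ≤
        2 * (Real.exp (Sig x) * F x (u x) (du x) / σ x ^ 2) -
          2 * (Real.exp (Sig x) * F x (v x) (dv x) / σ x ^ 2) := by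
    intro x hx hw hh
    have hx' := Ioo_subset_Icc_self hx
    exact mul_le_two_mul_div_sub_of_mono_of_lipschitz (Real.exp_pos _) (pow_pos (hσpos x) 2)
      (hC (mem_image_of_mem _ hx')) (hmono x hx' (u x) (v x) (du x))
      (hLip x hx' (v x) (du x) (dv x)) (sub_pos.1 hw)
      (sub_nonpos.1 (nonpos_of_mul_nonpos_right hh.le (Real.exp_pos _)))
  have hw : ContinuousOn (fun x => u x - v x) (Icc a b) :=
    fun x hx => ((hudu x hx).sub (hvdv x hx)).continuousWithinAt
  have hw' : ∀ x ∈ Ioo a b, HasDerivAt (fun x => u x - v x) (du x - dv x) x := fun x hx =>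
    ((hudu x (Ioo_subset_Icc_self hx)).sub (hvdv x (Ioo_subset_Icc_self hx))).hasDerivAt
      (Icc_mem_nhds hx.1 hx.2)
  have hh : ContinuousOn (fun x => Real.exp (Sig x) * (du x - dv x)) (Icc a b) :=
    (Real.continuous_exp.comp hSig).continuousOn.mul (hdu.sub hdv)
  have hh' : ∀ x ∈ Ioo a b, HasDerivAt (fun x => Real.exp (Sig x) * (du x - dv x))
      (2 * (Real.exp (Sig x) * F x (u x) (du x) / σ x ^ 2) -
        2 * (Real.exp (Sig x) * F x (v x) (dv x) / σ x ^ 2)) x := fun x hx => by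
    simpa only [mul_sub] using (hflux_u x hx).fun_sub (hflux_v x hx)
  have hsign : ∀ x ∈ Ioo a b, 0 ≤ du x - dv x ↔ 0 ≤ Real.exp (Sig x) * (du x - dv x) :=
    fun x _ => (mul_nonneg_iff_of_pos_left (Real.exp_pos _)).symm
  intro x hx
  refine sub_nonpos.1 (nonpos_of_flux_deriv_ge_mul hw hw' hh hh' hsign hflux_ge ?_ ?_ x hx)
  · simp [hu.1, hv.1]
  · simp [hu.2.1, hv.2.1]

end IsBVPSolutionF

theorem bvp_at_most_one_solution_general
    (σ Sig : ℝ → ℝ) (hσ : Continuous σ) (hSig : Continuous Sig)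
    (hσpos : ∀ x, 0 < σ x) (a b : ℝ)
    (F : ℝ → ℝ → ℝ → ℝ)
    (hF : ContinuousOn (fun p : ℝ × ℝ × ℝ => F p.1 p.2.1 p.2.2)
      {p : ℝ × ℝ × ℝ | p.1 ∈ Icc a b})
    (hmono : ∀ x ∈ Icc a b, ∀ y ytilde z : ℝ,
      0 ≤ (F x y z - F x ytilde z) * (y - ytilde))
    (k : ℝ)
    (hLip : ∀ x ∈ Icc a b, ∀ y z ztilde : ℝ,
      |F x y z - F x y ztilde| ≤ k * |z - ztilde|)
    (A B : ℝ) (u v : ℝ → ℝ)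
    (hu : IsBVPSolutionF σ Sig a b A B F u)
    (hv : IsBVPSolutionF σ Sig a b A B F v) :
    EqOn u v (Icc a b) := fun x hx =>
  le_antisymm (hu.le_on_Icc hσ hSig hσpos hF hmono hLip hv x hx)
    (hv.le_on_Icc hσ hSig hσpos hF hmono hLip hu x hx)

/-- if `F` is continuous, non-decreasing in the second variable and
globally Lipschitz in the third variable, then for any `A, B ∈ ℝ` the boundary value
problem `Lu = F(x,u,u')`, `u(a) = A`, `u(b) = B` has at most one `C¹` solution. -/
theorem bvp_at_most_one_solution
    (σ Sig : ℝ → ℝ) (hσ : Continuous σ) (hSig : Continuous Sig)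
    (hσpos : ∀ x, 0 < σ x) (a b : ℝ) (hab : a < b)
    (F : ℝ → ℝ → ℝ → ℝ)
    (hF : ContinuousOn (fun p : ℝ × ℝ × ℝ => F p.1 p.2.1 p.2.2)
      {p : ℝ × ℝ × ℝ | p.1 ∈ Icc a b})
    (hmono : ∀ x ∈ Icc a b, ∀ y ytilde z : ℝ,
      0 ≤ (F x y z - F x ytilde z) * (y - ytilde))
    (k : ℝ) (hk : 0 ≤ k)
    (hLip : ∀ x ∈ Icc a b, ∀ y z ztilde : ℝ,
      |F x y z - F x y ztilde| ≤ k * |z - ztilde|)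
    (A B : ℝ) (u v : ℝ → ℝ)
    (hu : IsBVPSolutionF σ Sig a b A B F u)
    (hv : IsBVPSolutionF σ Sig a b A B F v) :
    EqOn u v (Icc a b) :=
  bvp_at_most_one_solution_general σ Sig hσ hSig hσpos a b F hF hmono k hLip A B u v hu hv
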